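/- arXiv:1203.6000 — 3 statements merged into one kernel-verified Lean document; each statement's English description precedes it below -/
import Mathlib

section
/- Let μ be a σ-finite measure half-invariant under a measurable map T : X → X, and let f ∈ L¹(X, μ) be non-negative. Then the limit f*(x) = lim_{n→∞} (1/n) Σ_{j=0}^{n-1} f(Tʲ(x)) exists for μ-almost every x. -/
/-!
Hopf's maximal ergodic theorem only needs `μ (T ⁻¹' B) ≤ μ B`: with
`M_N = max (0, S_1 g, …, S_N g)` one has `g = M_{N+1} - M_N ∘ T` on `{M_{N+1} > 0}`, and
half-invariance gives `∫ M_N ∘ T ≤ ∫ M_N`, so `∫ g ≥ 0` over `{x | ∃ n, S_n g x > 0}`.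
Applied to `f - b 1_C` on sets `C` of finite measure it yields the maximal inequality
`μ {sup_n S_n f / n > b} ≤ ‖f‖₁ / b`, so the upper limit of the averages is a.e. finite.
The upper and lower limits are `T`-invariant, hence so is `E = {liminf < a < b < limsup}`,
which has finite measure, and `μ` restricted to `E` is again half-invariant. The maximal
theorem applied there to `f - b` and to `a - f` gives `b μ E ≤ ∫_E f ≤ a μ E`, so `μ E = 0`.
-/

open MeasureTheory Filter Set Topology ENNReal

namespace ENNReal

variable {ι : Type*} {l : Filter ι} [l.NeBot] {a v u : ι → ℝ≥0∞} {c : ℝ≥0∞}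

theorem limsup_add_mul_of_tendsto (ha : Tendsto a l (𝓝 0)) (hv : Tendsto v l (𝓝 c))
    (hc₀ : c ≠ 0) (hc : c ≠ ∞) :
    limsup (fun i ↦ a i + v i * u i) l = c * limsup u l := by
  rw [show (fun i ↦ a i + v i * u i) = a + v * u from rfl,
    limsup_add_of_left_tendsto_zero ha]
  refine le_antisymm ?_ ?_
  · simpa [hv.limsup_eq] using limsup_mul_le' (f := l) (u := v) (v := u)
      (.inl (by rwa [hv.limsup_eq])) (.inl (by rwa [hv.limsup_eq]))
  · simpa [hv.liminf_eq, mul_comm] using le_limsup_mul (u := u) (v := v) (f := l)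

theorem liminf_add_mul_of_tendsto (ha : Tendsto a l (𝓝 0)) (hv : Tendsto v l (𝓝 c))
    (hc₀ : c ≠ 0) (hc : c ≠ ∞) :
    liminf (fun i ↦ a i + v i * u i) l = c * liminf u l := by
  rw [show (fun i ↦ a i + v i * u i) = a + v * u from rfl,
    liminf_add_of_left_tendsto_zero ha]
  refine le_antisymm ?_ ?_
  · simpa [hv.limsup_eq] using liminf_mul_le (f := l) (u := v) (v := u)
      (.inl (by rwa [hv.limsup_eq])) (.inl (by rwa [hv.limsup_eq]))
  · simpa [hv.liminf_eq] using le_liminf_mul (u := v) (v := u) (f := l)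

theorem tendsto_limsup_of_forall_rat
    (h : ∀ a b : ℚ, 0 ≤ a → a < b →
      ¬(liminf u l < ENNReal.ofReal a ∧ ENNReal.ofReal b < limsup u l)) :
    Tendsto u l (𝓝 (limsup u l)) := by
  refine tendsto_of_liminf_eq_limsup (le_antisymm liminf_le_limsup ?_) rfl
  by_contra! hlt
  obtain ⟨a, ha, hua, hab⟩ := ENNReal.lt_iff_exists_rat_btwn.1 hlt
  obtain ⟨b, -, hab', hbu⟩ := ENNReal.lt_iff_exists_rat_btwn.1 hab
  have : (a : ℝ) < b := (ENNReal.ofReal_lt_ofReal_iff'.1 hab').1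
  exact h a b ha (by exact_mod_cast this) ⟨hua, hbu⟩

end ENNReal

namespace MeasureTheory

variable {X : Type*} [MeasurableSpace X] {μ : Measure X} {T : X → X} {h : X → ℝ}

theorem Integrable.comp_of_map_le (hh : Integrable h μ) (hT : Measurable T)
    (hμ : μ.map T ≤ μ) : Integrable (h ∘ T) μ :=
  (hh.mono_measure hμ).comp_measurable hT

theorem integral_comp_le_of_map_le (hT : Measurable T) (hμ : μ.map T ≤ μ)
    (hh : Integrable h μ) (h0 : 0 ≤ h) : ∫ x, h (T x) ∂μ ≤ ∫ x, h x ∂μ := by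
  rw [← integral_map hT.aemeasurable (hh.mono_measure hμ).aestronglyMeasurable]
  exact integral_mono_measure hμ (Eventually.of_forall h0) hh

theorem map_restrict_le_of_preimage_eq (hT : Measurable T) (hμ : μ.map T ≤ μ) {s : Set X}
    (hs : MeasurableSet s) (hTs : T ⁻¹' s = s) : (μ.restrict s).map T ≤ μ.restrict s :=
  calc (μ.restrict s).map T = (μ.map T).restrict s := by rw [Measure.restrict_map hT hs, hTs]
    _ ≤ μ.restrict s := Measure.restrict_mono subset_rfl hμ

end MeasureTheory

section MaximalErgodic

variable {X : Type*}

def birkhoffSumMax (T : X → X) (g : X → ℝ) : ℕ → X → ℝ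
  | 0 => 0
  | N + 1 => fun x ↦ max (g x + birkhoffSumMax T g N (T x)) 0

variable {T : X → X} {g : X → ℝ}

theorem birkhoffSumMax_nonneg (N : ℕ) (x : X) : 0 ≤ birkhoffSumMax T g N x := by
  cases N
  exacts [le_rfl, le_max_right _ _]

theorem birkhoffSumMax_le_succ (N : ℕ) (x : X) :
    birkhoffSumMax T g N x ≤ birkhoffSumMax T g (N + 1) x := by
  induction N generalizing x with
  | zero => exact birkhoffSumMax_nonneg 1 x
  | succ N ih => exact max_le_max (add_le_add_right (ih (T x)) _) le_rfl

theorem birkhoffSumMax_succ_of_pos {N : ℕ} {x : X} (h : 0 < birkhoffSumMax T g (N + 1) x) :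
    birkhoffSumMax T g (N + 1) x = g x + birkhoffSumMax T g N (T x) :=
  max_eq_left <| not_lt.1 fun hlt ↦ h.ne' (max_eq_right hlt.le)

theorem birkhoffSum_le_birkhoffSumMax (n : ℕ) (x : X) :
    birkhoffSum T g n x ≤ birkhoffSumMax T g n x := by
  induction n generalizing x with
  | zero => simp [birkhoffSumMax]
  | succ n ih =>
    rw [birkhoffSum_succ']
    exact (add_le_add_right (ih (T x)) _).trans (le_max_left _ _)

theorem exists_birkhoffSum_eq_birkhoffSumMax (N : ℕ) (x : X) :
    ∃ n, birkhoffSum T g n x = birkhoffSumMax T g N x := by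
  induction N generalizing x with
  | zero => exact ⟨0, rfl⟩
  | succ N ih =>
    obtain ⟨n, hn⟩ := ih (T x)
    rcases le_total (g x + birkhoffSumMax T g N (T x)) 0 with h | h
    · exact ⟨0, by simp [birkhoffSumMax, max_eq_right h]⟩
    · exact ⟨n + 1, by simp [birkhoffSumMax, max_eq_left h, birkhoffSum_succ', hn]⟩

theorem birkhoffSum_sub_const (T : X → X) (g : X → ℝ) (b : ℝ) (n : ℕ) (x : X) :
    birkhoffSum T (fun y ↦ g y - b) n x = birkhoffSum T g n x - n * b := by
  simp [birkhoffSum, Finset.sum_sub_distrib]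

variable [MeasurableSpace X] {μ : Measure X}

theorem measurable_birkhoffSum (hT : Measurable T) (hg : Measurable g) (n : ℕ) :
    Measurable (birkhoffSum T g n) :=
  Finset.measurable_sum _ fun k _ ↦ hg.comp (hT.iterate k)

theorem measurable_birkhoffSumMax (hT : Measurable T) (hg : Measurable g) (N : ℕ) :
    Measurable (birkhoffSumMax T g N) := by
  induction N with
  | zero => exact measurable_const
  | succ N ih => exact (hg.add (ih.comp hT)).max measurable_const

theorem integrable_birkhoffSumMax (hT : Measurable T) (hμ : μ.map T ≤ μ)
    (hg : Integrable g μ) (N : ℕ) : Integrable (birkhoffSumMax T g N) μ := by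
  induction N with
  | zero => exact integrable_zero _ _ _
  | succ N ih => exact (hg.add (ih.comp_of_map_le hT hμ)).pos_part

theorem setIntegral_setOf_birkhoffSumMax_pos_nonneg (hT : Measurable T) (hμ : μ.map T ≤ μ)
    (hg : Measurable g) (hgi : Integrable g μ) (N : ℕ) :
    0 ≤ ∫ x in {x | 0 < birkhoffSumMax T g N x}, g x ∂μ := by
  cases N with
  | zero => simp [birkhoffSumMax]
  | succ N =>
    set A := {x | 0 < birkhoffSumMax T g (N + 1) x}
    set M := birkhoffSumMax T g (N + 1)
    set M' := birkhoffSumMax T g N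
    have hA : MeasurableSet A :=
      measurableSet_lt measurable_const (measurable_birkhoffSumMax hT hg _)
    have hMi : Integrable M μ := integrable_birkhoffSumMax hT hμ hgi (N + 1)
    have hM'i : Integrable M' μ := integrable_birkhoffSumMax hT hμ hgi N
    have hM'Ti : Integrable (fun x ↦ M' (T x)) μ := hM'i.comp_of_map_le hT hμ
    have h_eq : ∫ x in A, g x ∂μ = ∫ x in A, M x ∂μ - ∫ x in A, M' (T x) ∂μ := by
      rw [← integral_sub hMi.integrableOn hM'Ti.integrableOn]
      refine setIntegral_congr_fun hA fun x hx ↦ ?_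
      simp [M, M', birkhoffSumMax_succ_of_pos hx]
    have h_M : ∫ x in A, M x ∂μ = ∫ x, M x ∂μ := by
      refine setIntegral_eq_integral_of_forall_compl_eq_zero fun x hx ↦ ?_
      exact le_antisymm (not_lt.1 hx) (birkhoffSumMax_nonneg _ x)
    have h_M'T : ∫ x in A, M' (T x) ∂μ ≤ ∫ x, M x ∂μ :=
      calc ∫ x in A, M' (T x) ∂μ ≤ ∫ x, M' (T x) ∂μ :=
            setIntegral_le_integral hM'Ti (.of_forall fun x ↦ birkhoffSumMax_nonneg _ _)
        _ ≤ ∫ x, M' x ∂μ :=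
            integral_comp_le_of_map_le hT hμ hM'i fun x ↦ birkhoffSumMax_nonneg _ _
        _ ≤ ∫ x, M x ∂μ := integral_mono hM'i hMi fun x ↦ birkhoffSumMax_le_succ N x
    linarith

theorem setIntegral_setOf_exists_birkhoffSum_pos_nonneg (hT : Measurable T)
    (hμ : μ.map T ≤ μ) (hg : Measurable g) (hgi : Integrable g μ) :
    0 ≤ ∫ x in {x | ∃ n, 0 < birkhoffSum T g n x}, g x ∂μ := by
  have h_union :
      {x | ∃ n, 0 < birkhoffSum T g n x} = ⋃ N, {x | 0 < birkhoffSumMax T g N x} := by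
    ext x
    simp only [mem_iUnion]
    constructor
    · exact fun ⟨n, hn⟩ ↦ ⟨n, hn.trans_le (birkhoffSum_le_birkhoffSumMax n x)⟩
    · rintro ⟨N, hN⟩
      obtain ⟨n, hn⟩ := exists_birkhoffSum_eq_birkhoffSumMax (T := T) (g := g) N x
      exact ⟨n, hn ▸ hN⟩
  rw [h_union]
  refine ge_of_tendsto' (tendsto_setIntegral_of_monotone (fun N ↦ ?_) ?_ hgi.integrableOn)
    (setIntegral_setOf_birkhoffSumMax_pos_nonneg hT hμ hg hgi)
  · exact measurableSet_lt measurable_const (measurable_birkhoffSumMax hT hg N)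
  · exact monotone_nat_of_le_succ fun N x hx ↦ hx.trans_le (birkhoffSumMax_le_succ N x)

theorem mul_measureReal_univ_le_integral [IsFiniteMeasure μ] (hT : Measurable T)
    (hμ : μ.map T ≤ μ) (hg : Measurable g) (hgi : Integrable g μ) {b : ℝ}
    (h : ∀ᵐ x ∂μ, ∃ n : ℕ, b * n < birkhoffSum T g n x) :
    b * μ.real univ ≤ ∫ x, g x ∂μ := by
  have h_full : ∀ᵐ x ∂μ, x ∈ {x | ∃ n, 0 < birkhoffSum T (fun y ↦ g y - b) n x} := by
    filter_upwards [h] with x ⟨n, hn⟩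
    exact ⟨n, by rw [birkhoffSum_sub_const]; linarith⟩
  have h_nonneg := setIntegral_setOf_exists_birkhoffSum_pos_nonneg (g := fun y ↦ g y - b)
    hT hμ (hg.sub measurable_const) (hgi.sub (integrable_const b))
  rw [Measure.restrict_eq_self_of_ae_mem h_full, integral_sub hgi (integrable_const b),
    integral_const, smul_eq_mul] at h_nonneg
  linarith

theorem integral_le_mul_measureReal_univ [IsFiniteMeasure μ] (hT : Measurable T)
    (hμ : μ.map T ≤ μ) (hg : Measurable g) (hgi : Integrable g μ) {a : ℝ}
    (h : ∀ᵐ x ∂μ, ∃ n : ℕ, birkhoffSum T g n x < a * n) :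
    ∫ x, g x ∂μ ≤ a * μ.real univ := by
  have h_neg : ∀ᵐ x ∂μ, ∃ n : ℕ, -a * n < birkhoffSum T (fun y ↦ -g y) n x := by
    filter_upwards [h] with x ⟨n, hn⟩
    have : birkhoffSum T (fun y ↦ -g y) n x = -birkhoffSum T g n x := birkhoffSum_neg T g n x
    exact ⟨n, by linarith⟩
  have := mul_measureReal_univ_le_integral (g := fun y ↦ -g y) hT hμ hg.neg hgi.neg h_neg
  rw [integral_neg] at this
  linarith

theorem mul_measureReal_le_integral_of_subset (hT : Measurable T) (hμ : μ.map T ≤ μ)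
    (hg : Measurable g) (hgi : Integrable g μ) (hg0 : 0 ≤ g) {b : ℝ} (hb : 0 ≤ b) {C : Set X}
    (hC : MeasurableSet C) (hCμ : μ C ≠ ∞)
    (hCsub : C ⊆ {x | ∃ n : ℕ, b * n < birkhoffSum T g n x}) :
    b * μ.real C ≤ ∫ x, g x ∂μ := by
  set h := C.indicator fun _ ↦ b
  have hhi : Integrable h μ := (integrable_indicator_iff hC).2 (integrableOn_const hCμ)
  set A := {x | ∃ n, 0 < birkhoffSum T (fun y ↦ g y - h y) n x}
  have hCA : C ⊆ A := by
    intro x hx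
    obtain ⟨n, hn⟩ := hCsub hx
    have h_le : birkhoffSum T h n x ≤ n * b := by
      simpa [birkhoffSum] using Finset.sum_le_card_nsmul (Finset.range n)
        (fun k ↦ h (T^[k] x)) b fun k _ ↦ indicator_le_self' (fun _ _ ↦ hb) _
    have h_sub : birkhoffSum T (fun y ↦ g y - h y) n x
        = birkhoffSum T g n x - birkhoffSum T h n x :=
      birkhoffSum_sub T g h n x
    exact ⟨n, by linarith⟩
  have h_nonneg := setIntegral_setOf_exists_birkhoffSum_pos_nonneg (g := fun y ↦ g y - h y)
    hT hμ (hg.sub (measurable_const.indicator hC)) (hgi.sub hhi)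
  have h_ind : ∫ x in A, h x ∂μ = b * μ.real C := by
    rw [integral_indicator_const _ hC, measureReal_restrict_apply hC,
      inter_eq_left.2 hCA, smul_eq_mul, mul_comm]
  rw [integral_sub hgi.integrableOn hhi.integrableOn, h_ind] at h_nonneg
  linarith [setIntegral_le_integral (s := A) hgi (Eventually.of_forall hg0)]

end MaximalErgodic

section BirkhoffLimits

variable {X : Type*}

noncomputable def birkhoffLimsup (T : X → X) (f : X → ℝ) (x : X) : ℝ≥0∞ :=
  limsup (fun n ↦ ENNReal.ofReal (birkhoffAverage ℝ T f n x)) atTop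

noncomputable def birkhoffLiminf (T : X → X) (f : X → ℝ) (x : X) : ℝ≥0∞ :=
  liminf (fun n ↦ ENNReal.ofReal (birkhoffAverage ℝ T f n x)) atTop

variable {T : X → X} {f : X → ℝ}

theorem birkhoffAverage_nonneg (hf0 : 0 ≤ f) (n : ℕ) (x : X) :
    0 ≤ birkhoffAverage ℝ T f n x :=
  smul_nonneg (inv_nonneg.2 n.cast_nonneg) (Finset.sum_nonneg fun _ _ ↦ hf0 _)

theorem birkhoffAverage_succ (T : X → X) (f : X → ℝ) (n : ℕ) (x : X) :
    birkhoffAverage ℝ T f (n + 1) x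
      = f x / (n + 1) + n / (n + 1) * birkhoffAverage ℝ T f n (T x) := by
  rcases eq_or_ne n 0 with rfl | hn
  · simp
  · simp only [birkhoffAverage, birkhoffSum_succ', smul_eq_mul]
    push_cast
    field_simp

theorem ofReal_birkhoffAverage_succ (hf0 : 0 ≤ f) (n : ℕ) (x : X) :
    ENNReal.ofReal (birkhoffAverage ℝ T f (n + 1) x)
      = ENNReal.ofReal (f x / (n + 1))
        + ENNReal.ofReal (n / (n + 1)) * ENNReal.ofReal (birkhoffAverage ℝ T f n (T x)) := by
  rw [birkhoffAverage_succ, ENNReal.ofReal_add (div_nonneg (hf0 x) (by positivity))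
    (mul_nonneg (by positivity) (birkhoffAverage_nonneg hf0 n _)),
    ENNReal.ofReal_mul (by positivity)]

theorem tendsto_ofReal_div_natCast_add_one (c : ℝ) :
    Tendsto (fun n : ℕ ↦ ENNReal.ofReal (c / (n + 1))) atTop (𝓝 0) := by
  simpa using ENNReal.tendsto_ofReal
    ((tendsto_const_div_atTop_nhds_zero_nat c).comp (tendsto_add_atTop_nat 1))

theorem tendsto_ofReal_natCast_div_add_one :
    Tendsto (fun n : ℕ ↦ ENNReal.ofReal (n / (n + 1))) atTop (𝓝 1) := by
  simpa using ENNReal.tendsto_ofReal (tendsto_natCast_div_add_atTop (1 : ℝ))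

theorem birkhoffLimsup_apply (hf0 : 0 ≤ f) (x : X) :
    birkhoffLimsup T f (T x) = birkhoffLimsup T f x := by
  simp only [birkhoffLimsup]
  conv_rhs => rw [← limsup_nat_add _ 1]
  simp_rw [ofReal_birkhoffAverage_succ hf0]
  rw [ENNReal.limsup_add_mul_of_tendsto (tendsto_ofReal_div_natCast_add_one _)
    tendsto_ofReal_natCast_div_add_one one_ne_zero one_ne_top, one_mul]

theorem birkhoffLiminf_apply (hf0 : 0 ≤ f) (x : X) :
    birkhoffLiminf T f (T x) = birkhoffLiminf T f x := by
  simp only [birkhoffLiminf]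
  conv_rhs => rw [← liminf_nat_add _ 1]
  simp_rw [ofReal_birkhoffAverage_succ hf0]
  rw [ENNReal.liminf_add_mul_of_tendsto (tendsto_ofReal_div_natCast_add_one _)
    tendsto_ofReal_natCast_div_add_one one_ne_zero one_ne_top, one_mul]

theorem exists_mul_lt_birkhoffSum_of_lt_birkhoffLimsup {b : ℝ} {x : X}
    (h : ENNReal.ofReal b < birkhoffLimsup T f x) : ∃ n : ℕ, b * n < birkhoffSum T f n x := by
  obtain ⟨n, hbn, hn⟩ := ((frequently_lt_of_lt_limsup (by isBoundedDefault) h).and_eventually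
    (eventually_gt_atTop 0)).exists
  have : b < (n : ℝ)⁻¹ * birkhoffSum T f n x := (ENNReal.ofReal_lt_ofReal_iff'.1 hbn).1
  exact ⟨n, by rwa [lt_inv_mul_iff₀ (by positivity), mul_comm] at this⟩

theorem exists_birkhoffSum_lt_mul_of_birkhoffLiminf_lt {a : ℝ} {x : X}
    (h : birkhoffLiminf T f x < ENNReal.ofReal a) : ∃ n : ℕ, birkhoffSum T f n x < a * n := by
  obtain ⟨n, han, hn⟩ := ((frequently_lt_of_liminf_lt (by isBoundedDefault) h).and_eventually
    (eventually_gt_atTop 0)).exists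
  have : (n : ℝ)⁻¹ * birkhoffSum T f n x < a := (ENNReal.ofReal_lt_ofReal_iff'.1 han).1
  exact ⟨n, by rwa [inv_mul_lt_iff₀ (by positivity), mul_comm] at this⟩

theorem tendsto_birkhoffAverage_of_forall_rat (hf0 : 0 ≤ f) {x : X}
    (h_top : birkhoffLimsup T f x ≠ ∞)
    (h_gap : ∀ a b : ℚ, 0 ≤ a → a < b →
      ¬(birkhoffLiminf T f x < ENNReal.ofReal a ∧ ENNReal.ofReal b < birkhoffLimsup T f x)) :
    Tendsto (fun n ↦ birkhoffAverage ℝ T f n x) atTop (𝓝 (birkhoffLimsup T f x).toReal) := by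
  have := (ENNReal.tendsto_toReal h_top).comp (ENNReal.tendsto_limsup_of_forall_rat h_gap)
  simpa [Function.comp_def, ENNReal.toReal_ofReal (birkhoffAverage_nonneg hf0 _ _)] using this

variable [MeasurableSpace X] {μ : Measure X}

theorem measurable_birkhoffAverage (hT : Measurable T) (hf : Measurable f) (n : ℕ) :
    Measurable (birkhoffAverage ℝ T f n) :=
  (measurable_birkhoffSum hT hf n).const_smul (n : ℝ)⁻¹

theorem measurable_birkhoffLimsup (hT : Measurable T) (hf : Measurable f) :
    Measurable (birkhoffLimsup T f) :=
  .limsup fun n ↦ (measurable_birkhoffAverage hT hf n).ennreal_ofReal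

theorem measurable_birkhoffLiminf (hT : Measurable T) (hf : Measurable f) :
    Measurable (birkhoffLiminf T f) :=
  .liminf fun n ↦ (measurable_birkhoffAverage hT hf n).ennreal_ofReal

theorem measure_setOf_exists_mul_lt_birkhoffSum_le [SigmaFinite μ] (hT : Measurable T)
    (hμ : μ.map T ≤ μ) (hf : Measurable f) (hfi : Integrable f μ) (hf0 : 0 ≤ f) {b : ℝ}
    (hb : 0 < b) :
    μ {x | ∃ n : ℕ, b * n < birkhoffSum T f n x} ≤ ENNReal.ofReal ((∫ x, f x ∂μ) / b) := by
  have hD : MeasurableSet {x | ∃ n : ℕ, b * n < birkhoffSum T f n x} := by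
    simp only [ofPred_exists]
    exact .iUnion fun n ↦ measurableSet_lt measurable_const (measurable_birkhoffSum hT hf n)
  refine le_of_forall_lt fun r hr ↦ ?_
  obtain ⟨C, hC, hCD, hrC, hCμ⟩ := Measure.exists_subset_measure_lt_top hD hr
  refine hrC.trans_le ?_
  rw [← ofReal_toReal hCμ.ne]
  refine ENNReal.ofReal_le_ofReal ((le_div_iff₀ hb).2 ?_)
  rw [mul_comm]
  exact mul_measureReal_le_integral_of_subset hT hμ hf hfi hf0 hb.le hC hCμ.ne hCD

theorem ae_birkhoffLimsup_lt_top [SigmaFinite μ] (hT : Measurable T) (hμ : μ.map T ≤ μ)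
    (hf : Measurable f) (hfi : Integrable f μ) (hf0 : 0 ≤ f) :
    ∀ᵐ x ∂μ, birkhoffLimsup T f x < ∞ := by
  have h_lim : Tendsto (fun n : ℕ ↦ ENNReal.ofReal ((∫ x, f x ∂μ) / n)) atTop (𝓝 0) := by
    simpa using ENNReal.tendsto_ofReal (tendsto_const_div_atTop_nhds_zero_nat _)
  simp only [ae_iff, not_lt, top_le_iff]
  refine le_antisymm (ge_of_tendsto h_lim ?_) bot_le
  filter_upwards [eventually_gt_atTop 0] with n hn
  refine (measure_mono fun x hx ↦ ?_).trans
    (measure_setOf_exists_mul_lt_birkhoffSum_le hT hμ hf hfi hf0 (Nat.cast_pos.2 hn))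
  exact exists_mul_lt_birkhoffSum_of_lt_birkhoffLimsup
    (by rw [show birkhoffLimsup T f x = ∞ from hx]; exact ofReal_lt_top)

theorem measure_birkhoffLiminf_lt_lt_birkhoffLimsup [SigmaFinite μ] (hT : Measurable T)
    (hμ : μ.map T ≤ μ) (hf : Measurable f) (hfi : Integrable f μ) (hf0 : 0 ≤ f) {a b : ℝ}
    (ha : 0 ≤ a) (hab : a < b) :
    μ {x | birkhoffLiminf T f x < ENNReal.ofReal a ∧ ENNReal.ofReal b < birkhoffLimsup T f x}
      = 0 := by
  set E := {x | birkhoffLiminf T f x < ENNReal.ofReal a ∧ ENNReal.ofReal b < birkhoffLimsup T f x}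
  have hE : MeasurableSet E :=
    (measurableSet_lt (measurable_birkhoffLiminf hT hf) measurable_const).inter
      (measurableSet_lt measurable_const (measurable_birkhoffLimsup hT hf))
  have hEμ : μ E < ∞ :=
    ((measure_mono fun x hx ↦ exists_mul_lt_birkhoffSum_of_lt_birkhoffLimsup hx.2).trans
      (measure_setOf_exists_mul_lt_birkhoffSum_le hT hμ hf hfi hf0 (ha.trans_lt hab))).trans_lt
      ofReal_lt_top
  have hE_inv : T ⁻¹' E = E := by
    ext x
    simp [E, birkhoffLimsup_apply hf0, birkhoffLiminf_apply hf0]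
  have hν := map_restrict_le_of_preimage_eq hT hμ hE hE_inv
  have : IsFiniteMeasure (μ.restrict E) := isFiniteMeasure_restrict.2 hEμ.ne
  have h_lower := mul_measureReal_univ_le_integral hT hν hf hfi.restrict
    ((ae_restrict_iff' hE).2 (.of_forall fun x hx ↦
      exists_mul_lt_birkhoffSum_of_lt_birkhoffLimsup hx.2))
  have h_upper := integral_le_mul_measureReal_univ hT hν hf hfi.restrict
    ((ae_restrict_iff' hE).2 (.of_forall fun x hx ↦
      exists_birkhoffSum_lt_mul_of_birkhoffLiminf_lt hx.1))
  rw [measureReal_restrict_apply_univ] at h_lower h_upper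
  have : μ.real E = 0 := by nlinarith [measureReal_nonneg (μ := μ) (s := E)]
  exact (measureReal_eq_zero_iff hEμ.ne).1 this

end BirkhoffLimits

theorem birkhoff_halfInvariant_ae_convergence
    {X : Type*} [MeasurableSpace X] (μ : Measure X) [SigmaFinite μ]
    (T : X → X) (hT : Measurable T)
    (hhalf : ∀ B : Set X, MeasurableSet B → μ (T ⁻¹' B) ≤ μ B)
    (f : X → ℝ) (hf : Measurable f) (hfi : Integrable f μ) (hf0 : ∀ x, 0 ≤ f x) :
    ∀ᵐ x ∂μ, ∃ L : ℝ,
      Tendsto (fun n : ℕ => (n : ℝ)⁻¹ * ∑ j ∈ Finset.range n, f (T^[j] x))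
        atTop (nhds L) := by
  have hμ : μ.map T ≤ μ :=
    Measure.le_iff.2 fun B hB ↦ (Measure.map_apply hT hB).trans_le (hhalf B hB)
  have h_gap : ∀ᵐ x ∂μ, ∀ a b : ℚ, 0 ≤ a → a < b →
      ¬(birkhoffLiminf T f x < ENNReal.ofReal a ∧ ENNReal.ofReal b < birkhoffLimsup T f x) := by
    simp only [ae_all_iff, eventually_imp_distrib_left]
    intro a b ha hab
    exact measure_eq_zero_iff_ae_notMem.1 (measure_birkhoffLiminf_lt_lt_birkhoffLimsup hT hμ hf
      hfi hf0 (by exact_mod_cast ha) (by exact_mod_cast hab))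
  filter_upwards [h_gap, ae_birkhoffLimsup_lt_top hT hμ hf hfi hf0] with x hx_gap hx_top
  exact ⟨_, tendsto_birkhoffAverage_of_forall_rat hf0 hx_top.ne hx_gap⟩
end

section
/- Let μ be a finite measure on (X, 𝔅), half-invariant under a measurable T : X → X, and let f ∈ L¹(X, μ) be non-negative. Then ∫ f* dμ = lim_{n→∞} (1/n) Σ_{j=0}^{n-1} ∫ f ∘ Tʲ dμ = ∫ f dμ, where f* is the μ-a.e. limit of the Birkhoff averages of f. -/
/-!
Half-invariance says `μ.map T ≤ μ`; both measures have the same finite total mass, so they are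
equal and `T` preserves `μ`. Then every `f ∘ T^[j]` has the law of `f`, so each Birkhoff average
has integral `∫ f`, and the family `f ∘ T^[j]` is uniformly integrable; so are its Cesàro
averages. By Vitali's convergence theorem the a.e. convergence of the averages to `f*` upgrades
to `L¹` convergence, hence `∫ f* = lim ∫ (averages) = ∫ f`.
-/

open MeasureTheory Filter ProbabilityTheory Topology
open scoped ENNReal

theorem birkhoffAverage_eq_smul_sum {X E : Type*} [AddCommMonoid E] [Module ℝ E] (T : X → X)
    (f : X → E) (n : ℕ) :
    birkhoffAverage ℝ T f n = (n : ℝ)⁻¹ • ∑ j ∈ Finset.range n, f ∘ T^[j] := by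
  ext x
  simp [birkhoffAverage, birkhoffSum]

namespace MeasureTheory

variable {X : Type*} [MeasurableSpace X] {μ : Measure X} {T : X → X}

theorem measurePreserving_of_preimage_le [IsFiniteMeasure μ] (hT : Measurable T)
    (h : ∀ B, MeasurableSet B → μ (T ⁻¹' B) ≤ μ B) : MeasurePreserving T μ μ := by
  refine ⟨hT, Measure.eq_of_le_of_measure_univ_eq (Measure.le_iff.2 fun B hB ↦ ?_) ?_⟩
  · rw [Measure.map_apply hT hB]
    exact h B hB
  · rw [Measure.map_apply hT MeasurableSet.univ, Set.preimage_univ]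

theorem MeasurePreserving.identDistrib_comp_iterate {E : Type*} [MeasurableSpace E]
    (hT : MeasurePreserving T μ μ) {f : X → E} (hf : AEMeasurable f μ) (j : ℕ) :
    IdentDistrib (f ∘ T^[j]) f μ μ := by
  have hTj : IdentDistrib T^[j] id μ μ :=
    ⟨(hT.iterate j).aemeasurable, aemeasurable_id, by rw [(hT.iterate j).map_eq, Measure.map_id]⟩
  exact hTj.comp_of_aemeasurable (by rwa [(hT.iterate j).map_eq])

theorem MeasurePreserving.uniformIntegrable_birkhoffAverage {E : Type*} [NormedAddCommGroup E]
    [NormedSpace ℝ E] [MeasurableSpace E] [BorelSpace E] [IsFiniteMeasure μ] {p : ℝ≥0∞}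
    (hT : MeasurePreserving T μ μ) (hp : 1 ≤ p) (hp' : p ≠ ∞) {f : X → E} (hf : MemLp f p μ) :
    UniformIntegrable (birkhoffAverage ℝ T f) p μ := by
  have hcomp : UniformIntegrable (fun j ↦ f ∘ T^[j]) p μ :=
    MemLp.uniformIntegrable_of_identDistrib (j := 0) hp hp' hf
      fun j ↦ (hT.identDistrib_comp_iterate hf.aestronglyMeasurable.aemeasurable j).trans
        (hT.identDistrib_comp_iterate hf.aestronglyMeasurable.aemeasurable 0).symm
  convert uniformIntegrable_average hp hcomp using 2 with n
  exact birkhoffAverage_eq_smul_sum T f n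

theorem UniformIntegrable.tendsto_integral_of_ae_tendsto {E : Type*} [NormedAddCommGroup E]
    [NormedSpace ℝ E] [IsFiniteMeasure μ] {f : ℕ → X → E} {g : X → E}
    (hf : UniformIntegrable f 1 μ) (hfg : ∀ᵐ x ∂μ, Tendsto (fun n ↦ f n x) atTop (𝓝 (g x))) :
    Tendsto (fun n ↦ ∫ x, f n x ∂μ) atTop (𝓝 (∫ x, g x ∂μ)) := by
  have hg : MemLp g 1 μ := hf.memLp_of_ae_tendsto hfg
  refine tendsto_integral_of_L1' g hg.aestronglyMeasurable
    (.of_forall fun n ↦ memLp_one_iff_integrable.mp (hf.memLp n)) ?_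
  exact tendsto_Lp_finite_of_tendsto_ae le_rfl ENNReal.one_ne_top hf.1 hg hf.2.1 hfg

theorem MeasurePreserving.integral_birkhoffAverage {E : Type*} [NormedAddCommGroup E]
    [NormedSpace ℝ E] [MeasurableSpace E] [BorelSpace E] (hT : MeasurePreserving T μ μ)
    {f : X → E} (hf : Integrable f μ) (n : ℕ) :
    ∫ x, birkhoffAverage ℝ T f n x ∂μ = (n : ℝ)⁻¹ • ∑ j ∈ Finset.range n, ∫ x, f (T^[j] x) ∂μ := by
  have hcomp : ∀ j, Integrable (fun x ↦ f (T^[j] x)) μ := fun j ↦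
    (hT.identDistrib_comp_iterate hf.aemeasurable j).integrable_iff.2 hf
  simp only [birkhoffAverage, birkhoffSum]
  rw [integral_smul, integral_finsetSum _ fun j _ ↦ hcomp j]

theorem MeasurePreserving.inv_smul_sum_integral_comp_iterate {E : Type*} [NormedAddCommGroup E]
    [NormedSpace ℝ E] [MeasurableSpace E] [BorelSpace E] (hT : MeasurePreserving T μ μ)
    {f : X → E} (hf : AEMeasurable f μ) {n : ℕ} (hn : n ≠ 0) :
    (n : ℝ)⁻¹ • ∑ j ∈ Finset.range n, ∫ x, f (T^[j] x) ∂μ = ∫ x, f x ∂μ := by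
  have hcomp : ∀ j, ∫ x, f (T^[j] x) ∂μ = ∫ x, f x ∂μ := fun j ↦
    (hT.identDistrib_comp_iterate hf j).integral_eq
  simp only [hcomp, Finset.sum_const, Finset.card_range, ← Nat.cast_smul_eq_nsmul ℝ, smul_smul]
  rw [inv_mul_cancel₀ (Nat.cast_ne_zero.2 hn), one_smul]

end MeasureTheory

theorem birkhoff_halfInvariant_finite_integrals_general
    {X : Type*} [MeasurableSpace X] (μ : Measure X) [IsFiniteMeasure μ]
    (T : X → X) (hT : Measurable T)
    (hhalf : ∀ B : Set X, MeasurableSet B → μ (T ⁻¹' B) ≤ μ B)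
    (f : X → ℝ) (hfi : Integrable f μ)
    (fstar : X → ℝ)
    (hfstar : ∀ᵐ x ∂μ,
      Tendsto (fun n : ℕ => (n : ℝ)⁻¹ * ∑ j ∈ Finset.range n, f (T^[j] x))
        atTop (nhds (fstar x))) :
    (∫ x, fstar x ∂μ = ∫ x, f x ∂μ) ∧
      Tendsto (fun n : ℕ => (n : ℝ)⁻¹ * ∑ j ∈ Finset.range n, ∫ x, f (T^[j] x) ∂μ)
        atTop (nhds (∫ x, f x ∂μ)) := by
  have hTμ : MeasurePreserving T μ μ := measurePreserving_of_preimage_le hT hhalf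
  have hmean : Tendsto (fun n : ℕ => (n : ℝ)⁻¹ * ∑ j ∈ Finset.range n, ∫ x, f (T^[j] x) ∂μ)
      atTop (𝓝 (∫ x, f x ∂μ)) :=
    tendsto_const_nhds.congr' <| (eventually_ne_atTop 0).mono fun n hn ↦
      (hTμ.inv_smul_sum_integral_comp_iterate hfi.aemeasurable hn).symm
  have hUI : UniformIntegrable (birkhoffAverage ℝ T f) 1 μ :=
    hTμ.uniformIntegrable_birkhoffAverage le_rfl ENNReal.one_ne_top
      (memLp_one_iff_integrable.2 hfi)
  have hlim := hUI.tendsto_integral_of_ae_tendsto hfstar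
  simp only [hTμ.integral_birkhoffAverage hfi, smul_eq_mul] at hlim
  exact ⟨tendsto_nhds_unique hlim hmean, hmean⟩

theorem birkhoff_halfInvariant_finite_integrals
    {X : Type*} [MeasurableSpace X] (μ : Measure X) [IsFiniteMeasure μ]
    (T : X → X) (hT : Measurable T)
    (hhalf : ∀ B : Set X, MeasurableSet B → μ (T ⁻¹' B) ≤ μ B)
    (f : X → ℝ) (hf : Measurable f) (hfi : Integrable f μ) (hf0 : ∀ x, 0 ≤ f x)
    (fstar : X → ℝ)
    (hfstar : ∀ᵐ x ∂μ,
      Tendsto (fun n : ℕ => (n : ℝ)⁻¹ * ∑ j ∈ Finset.range n, f (T^[j] x))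
        atTop (nhds (fstar x))) :
    (∫ x, fstar x ∂μ = ∫ x, f x ∂μ) ∧
      Tendsto (fun n : ℕ => (n : ℝ)⁻¹ * ∑ j ∈ Finset.range n, ∫ x, f (T^[j] x) ∂μ)
        atTop (nhds (∫ x, f x ∂μ)) :=
  birkhoff_halfInvariant_finite_integrals_general μ T hT hhalf f hfi fstar hfstar
end

section
/- (Hopf's Maximal Ergodic theorem for contractions) Let μ be a σ-finite measure on X and U : L¹(X, μ) → L¹(X, μ) a positive linear contraction (g ≥ 0 ⟹ U(g) ≥ 0, and ‖U(g)‖₁ ≤ ‖g‖₁). Then for every f ∈ L¹(X, μ), ∫_{{f̂ > 0}} f dμ ≥ 0, where f̂ = sup_{n ≥ 1} (1/n) Σ_{j=0}^{n-1} Uʲ(f). -/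
/-!
Garsia's proof. Let `Sₙ = ∑_{j<n} Uʲ f` and `M_N = max_{0 ≤ k ≤ N} S_k ≥ 0`. Since
`S_{k+1} = f + U S_k ≤ f + U M_N` by positivity, `M_N ≤ f + U M_N` wherever `M_N > 0`; as `M_N`
vanishes elsewhere and `U M_N ≥ 0`, integrating gives
`∫_{M_N > 0} f ≥ ∫ M_N - ∫ U M_N ≥ 0` by the contraction property. The sets `{M_N > 0}` increase
to `{f̂ > 0}`.
-/

open MeasureTheory Filter Finset

section

variable {X : Type*} (U : (X → ℝ) → (X → ℝ)) (f : X → ℝ)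

/-- `M_N = max_{0 ≤ k ≤ N} S_k`, where `birkhoffSum U id k f = S_k = ∑_{j<k} Uʲ f`. -/
noncomputable def maxBirkhoffSum (N : ℕ) : X → ℝ :=
  (range (N + 1)).sup' nonempty_range_add_one fun k => birkhoffSum U id k f

variable {U f}

theorem birkhoffSum_le_maxBirkhoffSum {k N : ℕ} (hk : k ≤ N) :
    birkhoffSum U id k f ≤ maxBirkhoffSum U f N :=
  le_sup' (fun k => birkhoffSum U id k f) (mem_range.2 (Nat.lt_succ_of_le hk))

theorem maxBirkhoffSum_nonneg (N : ℕ) : 0 ≤ maxBirkhoffSum U f N := by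
  simpa [birkhoffSum_zero'] using birkhoffSum_le_maxBirkhoffSum (U := U) (f := f) N.zero_le

theorem monotone_maxBirkhoffSum : Monotone (maxBirkhoffSum U f) := fun _ _ hMN =>
  sup'_mono _ (range_subset_range.2 (Nat.succ_le_succ hMN)) _

theorem pos_maxBirkhoffSum_iff {N : ℕ} {x : X} :
    0 < maxBirkhoffSum U f N x ↔ ∃ k ≤ N, 0 < birkhoffSum U id k f x := by
  simp only [maxBirkhoffSum, Finset.sup'_apply, lt_sup'_iff, mem_range, Nat.lt_succ_iff]

theorem exists_pos_birkhoffAverage_iff {x : X} :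
    (∃ n : ℕ, 1 ≤ n ∧ 0 < (n : ℝ)⁻¹ * ∑ j ∈ range n, U^[j] f x) ↔
      ∃ N, 0 < maxBirkhoffSum U f N x := by
  simp only [pos_maxBirkhoffSum_iff, birkhoffSum, Finset.sum_apply, id]
  constructor
  · rintro ⟨n, -, hn⟩
    exact ⟨n, n, le_rfl, pos_of_mul_pos_right hn (by positivity)⟩
  · rintro ⟨-, k, -, hk⟩
    have hk0 : k ≠ 0 := by rintro rfl; simp at hk
    exact ⟨k, Nat.one_le_iff_ne_zero.2 hk0, mul_pos (by positivity) hk⟩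

end

section

variable {X : Type*} [MeasurableSpace X] {μ : Measure X} {U : (X → ℝ) → (X → ℝ)}

theorem map_zero_of_map_add
    (hadd : ∀ g h : X → ℝ, Integrable g μ → Integrable h μ → U (g + h) = U g + U h) :
    U 0 = 0 := by
  simpa using hadd 0 0 (integrable_zero _ _ _) (integrable_zero _ _ _)

theorem map_mono_of_map_add
    (hadd : ∀ g h : X → ℝ, Integrable g μ → Integrable h μ → U (g + h) = U g + U h)
    (hpos : ∀ g : X → ℝ, Integrable g μ → (∀ x, 0 ≤ g x) → ∀ x, 0 ≤ U g x)
    {g h : X → ℝ} (hg : Integrable g μ) (hh : Integrable h μ) (hle : g ≤ h) : U g ≤ U h := by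
  have hsplit : U h = U g + U (h - g) := by
    simpa using hadd g (h - g) hg (hh.sub hg)
  intro x
  have := hpos (h - g) (hh.sub hg) (fun y => sub_nonneg.2 (hle y)) x
  rw [hsplit, Pi.add_apply]
  linarith

theorem integral_map_le_of_nonneg
    (hpos : ∀ g : X → ℝ, Integrable g μ → (∀ x, 0 ≤ g x) → ∀ x, 0 ≤ U g x)
    (hcontr : ∀ g : X → ℝ, Integrable g μ → ∫ x, |U g x| ∂μ ≤ ∫ x, |g x| ∂μ)
    {g : X → ℝ} (hg : Integrable g μ) (hg0 : 0 ≤ g) : ∫ x, U g x ∂μ ≤ ∫ x, g x ∂μ := by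
  simpa only [abs_of_nonneg (hpos g hg hg0 _), abs_of_nonneg (hg0 _)] using hcontr g hg

variable {f : X → ℝ}

theorem integrable_iterate (hint : ∀ g : X → ℝ, Integrable g μ → Integrable (U g) μ)
    (hf : Integrable f μ) (n : ℕ) : Integrable (U^[n] f) μ :=
  Function.Iterate.rec (Integrable · μ) hf hint n

theorem integrable_birkhoffSum (hint : ∀ g : X → ℝ, Integrable g μ → Integrable (U g) μ)
    (hf : Integrable f μ) (n : ℕ) : Integrable (birkhoffSum U id n f) μ :=
  integrable_finsetSum' (range n) fun j _ => integrable_iterate hint hf j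

theorem birkhoffSum_succ_eq_add_map
    (hadd : ∀ g h : X → ℝ, Integrable g μ → Integrable h μ → U (g + h) = U g + U h)
    (hint : ∀ g : X → ℝ, Integrable g μ → Integrable (U g) μ) (hf : Integrable f μ) (n : ℕ) :
    birkhoffSum U id (n + 1) f = f + U (birkhoffSum U id n f) := by
  induction n with
  | zero => simp [birkhoffSum_zero', map_zero_of_map_add hadd]
  | succ n ih =>
    conv_lhs => rw [birkhoffSum_succ, ih]
    rw [birkhoffSum_succ, id_eq, id_eq,
      hadd _ _ (integrable_birkhoffSum hint hf n) (integrable_iterate hint hf n),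
      Function.iterate_succ_apply', add_assoc]

theorem integrable_maxBirkhoffSum (hint : ∀ g : X → ℝ, Integrable g μ → Integrable (U g) μ)
    (hf : Integrable f μ) (N : ℕ) : Integrable (maxBirkhoffSum U f N) μ :=
  sup'_induction (p := (Integrable · μ)) _ _ (fun _ h₁ _ h₂ => h₁.sup h₂)
    fun k _ => integrable_birkhoffSum hint hf k

theorem nullMeasurableSet_pos_maxBirkhoffSum
    (hint : ∀ g : X → ℝ, Integrable g μ → Integrable (U g) μ) (hf : Integrable f μ) (N : ℕ) :
    NullMeasurableSet {x | 0 < maxBirkhoffSum U f N x} μ :=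
  nullMeasurableSet_lt aemeasurable_const (integrable_maxBirkhoffSum hint hf N).aemeasurable

theorem maxBirkhoffSum_le_add_map
    (hadd : ∀ g h : X → ℝ, Integrable g μ → Integrable h μ → U (g + h) = U g + U h)
    (hint : ∀ g : X → ℝ, Integrable g μ → Integrable (U g) μ)
    (hpos : ∀ g : X → ℝ, Integrable g μ → (∀ x, 0 ≤ g x) → ∀ x, 0 ≤ U g x)
    (hf : Integrable f μ) {N : ℕ} {x : X} (hx : 0 < maxBirkhoffSum U f N x) :
    maxBirkhoffSum U f N x ≤ f x + U (maxBirkhoffSum U f N) x := by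
  obtain ⟨k, hk, hmax⟩ : ∃ k ∈ range (N + 1), maxBirkhoffSum U f N x = birkhoffSum U id k f x := by
    simpa only [maxBirkhoffSum, Finset.sup'_apply] using
      exists_mem_eq_sup' nonempty_range_add_one fun k => birkhoffSum U id k f x
  rw [hmax] at hx ⊢
  obtain ⟨j, rfl⟩ : ∃ j, k = j + 1 :=
    Nat.exists_eq_succ_of_ne_zero fun hk0 => by simp [hk0, birkhoffSum_zero] at hx
  have hle : U (birkhoffSum U id j f) ≤ U (maxBirkhoffSum U f N) :=
    map_mono_of_map_add hadd hpos (integrable_birkhoffSum hint hf j)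
      (integrable_maxBirkhoffSum hint hf N)
      (birkhoffSum_le_maxBirkhoffSum (by rw [mem_range] at hk; omega))
  rw [birkhoffSum_succ_eq_add_map hadd hint hf j, Pi.add_apply]
  exact add_le_add_right (hle x) _

theorem setIntegral_pos_maxBirkhoffSum_nonneg
    (hadd : ∀ g h : X → ℝ, Integrable g μ → Integrable h μ → U (g + h) = U g + U h)
    (hint : ∀ g : X → ℝ, Integrable g μ → Integrable (U g) μ)
    (hpos : ∀ g : X → ℝ, Integrable g μ → (∀ x, 0 ≤ g x) → ∀ x, 0 ≤ U g x)
    (hcontr : ∀ g : X → ℝ, Integrable g μ → ∫ x, |U g x| ∂μ ≤ ∫ x, |g x| ∂μ)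
    (hf : Integrable f μ) (N : ℕ) :
    0 ≤ ∫ x in {x | 0 < maxBirkhoffSum U f N x}, f x ∂μ := by
  set m := maxBirkhoffSum U f N
  have hm : Integrable m μ := integrable_maxBirkhoffSum hint hf N
  have hUm : Integrable (U m) μ := hint m hm
  have hm0 : 0 ≤ m := maxBirkhoffSum_nonneg N
  calc 0 ≤ ∫ x, m x ∂μ - ∫ x, U m x ∂μ :=
        sub_nonneg.2 (integral_map_le_of_nonneg hpos hcontr hm hm0)
    _ ≤ ∫ x in {x | 0 < m x}, m x ∂μ - ∫ x in {x | 0 < m x}, U m x ∂μ := by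
        rw [setIntegral_eq_integral_of_forall_compl_eq_zero (s := {x | 0 < m x}) fun x hx =>
          le_antisymm (not_lt.1 hx) (hm0 x)]
        exact sub_le_sub_left
          (setIntegral_le_integral hUm (Eventually.of_forall (hpos m hm hm0))) _
    _ = ∫ x in {x | 0 < m x}, (m x - U m x) ∂μ :=
        (integral_sub hm.integrableOn hUm.integrableOn).symm
    _ ≤ ∫ x in {x | 0 < m x}, f x ∂μ := by
        refine integral_mono_ae (hm.sub hUm).integrableOn hf.integrableOn ?_
        filter_upwards [ae_restrict_mem₀ (nullMeasurableSet_pos_maxBirkhoffSum hint hf N)]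
          with x hx
        linarith [maxBirkhoffSum_le_add_map hadd hint hpos hf hx]

end

theorem hopf_maximal_ergodic_general
    {X : Type*} [MeasurableSpace X] (μ : Measure X)
    (U : (X → ℝ) → (X → ℝ))
    (hadd : ∀ g h : X → ℝ, Integrable g μ → Integrable h μ → U (g + h) = U g + U h)
    (hint : ∀ g : X → ℝ, Integrable g μ → Integrable (U g) μ)
    (hpos : ∀ g : X → ℝ, Integrable g μ → (∀ x, 0 ≤ g x) → ∀ x, 0 ≤ U g x)
    (hcontr : ∀ g : X → ℝ, Integrable g μ → ∫ x, |U g x| ∂μ ≤ ∫ x, |g x| ∂μ)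
    (f : X → ℝ) (hf : Integrable f μ) :
    0 ≤ ∫ x in {x : X | ∃ n : ℕ, 1 ≤ n ∧
        0 < (n : ℝ)⁻¹ * ∑ j ∈ Finset.range n, U^[j] f x}, f x ∂μ := by
  have hsets : {x : X | ∃ n : ℕ, 1 ≤ n ∧ 0 < (n : ℝ)⁻¹ * ∑ j ∈ Finset.range n, U^[j] f x} =
      ⋃ N, {x | 0 < maxBirkhoffSum U f N x} := by
    ext x
    simpa only [Set.mem_ofPred_eq, Set.mem_iUnion] using exists_pos_birkhoffAverage_iff
  have hmono : Monotone fun N => {x | 0 < maxBirkhoffSum U f N x} := fun _ _ hMN _ hx =>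
    lt_of_lt_of_le hx (monotone_maxBirkhoffSum hMN _)
  rw [hsets]
  exact ge_of_tendsto'
    (tendsto_setIntegral_of_monotone₀ (nullMeasurableSet_pos_maxBirkhoffSum hint hf) hmono
      hf.integrableOn)
    (setIntegral_pos_maxBirkhoffSum_nonneg hadd hint hpos hcontr hf)

theorem hopf_maximal_ergodic
    {X : Type*} [MeasurableSpace X] (μ : Measure X) [SigmaFinite μ]
    (U : (X → ℝ) → (X → ℝ))
    (hadd : ∀ g h : X → ℝ, Integrable g μ → Integrable h μ → U (g + h) = U g + U h)
    (hsmul : ∀ (c : ℝ) (g : X → ℝ), Integrable g μ → U (c • g) = c • U g)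
    (hint : ∀ g : X → ℝ, Integrable g μ → Integrable (U g) μ)
    (hpos : ∀ g : X → ℝ, Integrable g μ → (∀ x, 0 ≤ g x) → ∀ x, 0 ≤ U g x)
    (hcontr : ∀ g : X → ℝ, Integrable g μ → ∫ x, |U g x| ∂μ ≤ ∫ x, |g x| ∂μ)
    (f : X → ℝ) (hf : Integrable f μ) :
    0 ≤ ∫ x in {x : X | ∃ n : ℕ, 1 ≤ n ∧
        0 < (n : ℝ)⁻¹ * ∑ j ∈ Finset.range n, U^[j] f x}, f x ∂μ :=
  hopf_maximal_ergodic_general μ U hadd hint hpos hcontr f hf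
end
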